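/- arXiv:2005.12601 — 5 statements merged into one kernel-verified Lean document; each statement's English description precedes it below -/
import Mathlib

section
/- Let v₁,…,v_{j₀} be orthonormal vectors in ℝ^{j*} with j₀ ≥ j*/2 − 1 and j₀ ≥ j*/3, and let ξ₁,…,ξ_{j₀} be i.i.d. Rademacher random variables. Define δ_ξ^j = Σ_{k=1}^{j₀} ξ_k v_{kj}. Then E[ Σ_{j=1}^{j*} |δ_ξ^j| ] ≥ j*/(24√2), provided j₀ ≥ j*/2 − 1. -/
/-!
Fix a coordinate `j` and put `a k = v k j`. Bessel's inequality against the `j`-th basis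
vector gives `s = ∑ k, a k ^ 2 ≤ 1`, and the columns carry total mass `∑ j, s_j = j₀`.
For the Rademacher sum `X = ∑ k, ξ k * a k` one has `E X² = s` and `E X⁴ ≤ 3 s²`, both by
peeling off one sign at a time. The pointwise bound `x² - x⁴/4 ≤ |x|` then yields
`E |X| ≥ s - 3 s²/4 ≥ s/4`, and summing over `j` gives `j₀/4 ≥ j*/12 ≥ j*/(24√2)`.
-/

open Real Finset

def rademacherSum {n : ℕ} (a : Fin n → ℝ) (ε : Fin n → Bool) : ℝ :=
  ∑ k, (if ε k then (1 : ℝ) else -1) * a k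

section RademacherMoments

variable {n : ℕ}

lemma sum_rademacherSum_succ (f : ℝ → ℝ) (a : Fin (n + 1) → ℝ) :
    ∑ ε : Fin (n + 1) → Bool, f (rademacherSum a ε) =
      ∑ ε : Fin n → Bool,
        (f (a 0 + rademacherSum (Fin.tail a) ε) + f (-a 0 + rademacherSum (Fin.tail a) ε)) := by
  rw [← (Fin.consEquiv fun _ => Bool).sum_comp, Fintype.sum_prod_type, Fintype.sum_bool,
    ← sum_add_distrib]
  simp [rademacherSum, Fin.sum_univ_succ, Fin.tail]

lemma sum_rademacherSum_sq (a : Fin n → ℝ) :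
    ∑ ε, rademacherSum a ε ^ 2 = 2 ^ n * ∑ k, a k ^ 2 := by
  induction n with
  | zero => simp [rademacherSum]
  | succ n ih =>
    have parallelogram : ∀ y : ℝ, (a 0 + y) ^ 2 + (-a 0 + y) ^ 2 = 2 * y ^ 2 + 2 * a 0 ^ 2 :=
      fun y => by ring
    simp_rw [sum_rademacherSum_succ (· ^ 2), parallelogram, sum_add_distrib, ← mul_sum, ih,
      Fin.sum_univ_succ (fun k => a k ^ 2), sum_const, card_univ, Fintype.card_pi,
      Fintype.card_bool, prod_const, card_univ, Fintype.card_fin, nsmul_eq_mul]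
    simp only [Fin.tail]
    push_cast
    ring

lemma sum_rademacherSum_pow_four_le (a : Fin n → ℝ) :
    ∑ ε, rademacherSum a ε ^ 4 ≤ 3 * 2 ^ n * (∑ k, a k ^ 2) ^ 2 := by
  induction n with
  | zero => simp [rademacherSum]
  | succ n ih =>
    have even_part : ∀ y : ℝ, (a 0 + y) ^ 4 + (-a 0 + y) ^ 4 =
        2 * y ^ 4 + 12 * a 0 ^ 2 * y ^ 2 + 2 * a 0 ^ 4 :=
      fun y => by ring
    simp_rw [sum_rademacherSum_succ (· ^ 4), even_part, sum_add_distrib, ← mul_sum,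
      sum_rademacherSum_sq, Fin.sum_univ_succ (fun k => a k ^ 2), sum_const, card_univ,
      Fintype.card_pi, Fintype.card_bool, prod_const, card_univ, Fintype.card_fin, nsmul_eq_mul]
    have ih_tail := ih (Fin.tail a)
    simp only [Fin.tail] at ih_tail ⊢
    have hP : (0 : ℝ) ≤ 2 ^ n := by positivity
    push_cast
    rw [pow_succ (2 : ℝ) n]
    generalize ∑ ε, rademacherSum (Fin.tail a) ε ^ 4 = M at ih_tail ⊢
    generalize ∑ k : Fin n, a k.succ ^ 2 = s at ih_tail ⊢
    nlinarith [mul_nonneg hP (pow_nonneg (sq_nonneg (a 0)) 2)]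

lemma sq_sub_pow_four_div_four_le_abs (x : ℝ) : x ^ 2 - x ^ 4 / 4 ≤ |x| := by
  rcases abs_cases x with ⟨h, hx⟩ | ⟨h, hx⟩ <;> rw [h] <;>
    nlinarith [sq_nonneg (x - 1), sq_nonneg (x + 1), sq_nonneg (x - 2), sq_nonneg (x + 2)]

lemma sum_sq_div_four_le_mean_abs_rademacherSum (a : Fin n → ℝ) (ha : ∑ k, a k ^ 2 ≤ 1) :
    (∑ k, a k ^ 2) / 4 ≤ 1 / 2 ^ n * ∑ ε, |rademacherSum a ε| := by
  have hP : (0 : ℝ) < 2 ^ n := by positivity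
  have hs : 0 ≤ ∑ k, a k ^ 2 := by positivity
  have fourth := sum_rademacherSum_pow_four_le a
  rw [div_mul_eq_mul_div, one_mul, le_div_iff₀ hP]
  calc (∑ k, a k ^ 2) / 4 * 2 ^ n
      ≤ ∑ ε, rademacherSum a ε ^ 2 - (∑ ε, rademacherSum a ε ^ 4) / 4 := by
        rw [sum_rademacherSum_sq]
        nlinarith [mul_nonneg (mul_nonneg hP.le hs) (sub_nonneg.mpr ha)]
    _ = ∑ ε, (rademacherSum a ε ^ 2 - rademacherSum a ε ^ 4 / 4) := by
        rw [sum_sub_distrib, sum_div]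
    _ ≤ ∑ ε, |rademacherSum a ε| := sum_le_sum fun ε _ => sq_sub_pow_four_div_four_le_abs _

end RademacherMoments

section EuclideanColumns

variable {ι m : Type*} [Fintype ι] [Fintype m] {v : ι → EuclideanSpace ℝ m}

lemma Orthonormal.sum_sq_apply_le_one [DecidableEq m] (hv : Orthonormal ℝ v) (j : m) :
    ∑ k, v k j ^ 2 ≤ 1 := by
  simpa [EuclideanSpace.inner_single_right] using
    hv.sum_inner_products_le (EuclideanSpace.single j (1 : ℝ)) (s := univ)

lemma Orthonormal.sum_sum_sq_apply (hv : Orthonormal ℝ v) :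
    ∑ j, ∑ k, v k j ^ 2 = Fintype.card ι := by
  rw [sum_comm]
  simp [← EuclideanSpace.real_norm_sq_eq, hv.1]

end EuclideanColumns

theorem stmt1_general (jstar j₀ : ℕ)
    (v : Fin j₀ → EuclideanSpace ℝ (Fin jstar)) (hv : Orthonormal ℝ v)
    (h2 : (j₀ : ℝ) ≥ (jstar : ℝ) / 3) :
    (1 / 2 ^ j₀ : ℝ) * ∑ ε : Fin j₀ → Bool, ∑ j : Fin jstar,
        |∑ k : Fin j₀, (if ε k then (1 : ℝ) else -1) * v k j|
      ≥ (jstar : ℝ) / (24 * Real.sqrt 2) := by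
  have column_mean : ∀ j, (∑ k, v k j ^ 2) / 4 ≤
      1 / 2 ^ j₀ * ∑ ε, |rademacherSum (fun k => v k j) ε| :=
    fun j => sum_sq_div_four_le_mean_abs_rademacherSum _ (hv.sum_sq_apply_le_one j)
  calc (jstar : ℝ) / (24 * √2) ≤ jstar / 12 := by
        gcongr
        linarith [one_lt_sqrt_two]
    _ ≤ j₀ / 4 := by linarith
    _ = ∑ j, (∑ k, v k j ^ 2) / 4 := by rw [← sum_div, hv.sum_sum_sq_apply, Fintype.card_fin]
    _ ≤ ∑ j, 1 / 2 ^ j₀ * ∑ ε, |rademacherSum (fun k => v k j) ε| :=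
        sum_le_sum fun j _ => column_mean j
    _ = _ := by rw [sum_comm, mul_sum]; rfl

/-- For orthonormal vectors `v 1, …, v j₀` in `ℝ^{j*}` with
`j₀ ≥ j*/2 − 1` and `j₀ ≥ j*/3`, and i.i.d. Rademacher signs `ξ`, the expected
`ℓ¹` mass of `δ_ξ = ∑ k ξ k • v k` is at least `j*/(24√2)`. The expectation over
the Rademacher vector is written as the average over all sign patterns. -/
theorem stmt1 (jstar j₀ : ℕ)
    (v : Fin j₀ → EuclideanSpace ℝ (Fin jstar)) (hv : Orthonormal ℝ v)
    (h1 : (j₀ : ℝ) ≥ (jstar : ℝ) / 2 - 1) (h2 : (j₀ : ℝ) ≥ (jstar : ℝ) / 3) :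
    (1 / 2 ^ j₀ : ℝ) * ∑ ε : Fin j₀ → Bool, ∑ j : Fin jstar,
        |∑ k : Fin j₀, (if ε k then (1 : ℝ) else -1) * v k j|
      ≥ (jstar : ℝ) / (24 * Real.sqrt 2) :=
  stmt1_general jstar j₀ v hv h2
end

section
/- Let Z₁, Z₂ be i.i.d. random vectors in ℝ^B with E Z_{1j} = p(j), Cov(Z_{1j},Z_{1j'}) = 1_{j=j'}(p(j)+8/α²) − p(j)p(j'), where p ∈ [0,1]^B with Σ_j p(j) ≤ 1 and α ∈ (0,1]. Define h(z₁,z₂) = Σ_{j∈B} (z_{1j}−p₀(j))(z_{2j}−p₀(j)) for a fixed vector p₀ ∈ [0,1]^B with Σ p₀(j) ≤ 1. Then Var(h(Z₁,Z₂)) is bounded and, for the U-statistic S_B = (1/(n(n−1))) Σ_{i₁≠i₂} h(Z_{i₁},Z_{i₂}) built from n i.i.d. copies, Var(S_B) ≤ (36/(nα²)) Σ_{j∈B} (p(j)−p₀(j))² + 164|B|/(n(n−1)α⁴). -/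
/-!
Put `Y i = Z i - p₀`, so that the summand is the inner product `⟪Y a, Y b⟫` and `S_B` is a
U-statistic. Expanding its variance into covariances of kernel terms, only pairs of index pairs
sharing an index contribute, which gives the Hoeffding formula
`Var (∑_{a ≠ b} h_ab) = n(n-1)(2ζ₂ + 4(n-2)ζ₁)` with `ζ₂ = Var h_12`, `ζ₁ = Cov (h_12, h_13)`.
For the inner-product kernel of independent vectors with mean `m = p - p₀` and covariance matrix
`Σ`, factorising expectations over independent coordinates gives `ζ₁ = mᵀΣm` and
`ζ₂ = tr Σ² + 2 mᵀΣm`, hence `Var S_B = 2 tr Σ² / (n(n-1)) + 4 mᵀΣm / n`. Finally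
`Σ = diag (p + 8/α²) - p pᵀ`, for which `mᵀΣm ≤ (9/α²)‖m‖²` and `tr Σ² ≤ 82|B|/α⁴`.
-/

open MeasureTheory ProbabilityTheory Real Finset

noncomputable def cov {Ω : Type*} [MeasureSpace Ω] (f g : Ω → ℝ) : ℝ :=
  ∫ ω, (f ω - ∫ ω', f ω' ∂ℙ) * (g ω - ∫ ω', g ω' ∂ℙ) ∂ℙ

theorem cov_eq_covariance {Ω : Type*} [MeasureSpace Ω] (f g : Ω → ℝ) :
    cov f g = cov[f, g; ℙ] := rfl

section IndependentProducts

variable {Ω : Type*} [MeasurableSpace Ω] {μ : Measure Ω}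

theorem ProbabilityTheory.IndepFun.memLp_two_mul {X U : Ω → ℝ} (h : IndepFun X U μ)
    (hX : MemLp X 2 μ) (hU : MemLp U 2 μ) : MemLp (fun ω => X ω * U ω) 2 μ := by
  refine (memLp_two_iff_integrable_sq (hX.aestronglyMeasurable.mul hU.aestronglyMeasurable)).2 ?_
  simp only [Pi.mul_apply, mul_pow]
  exact (h.comp (measurable_id.pow_const 2) (measurable_id.pow_const 2)).integrable_mul
    hX.integrable_sq hU.integrable_sq

theorem covariance_mul_mul_of_indepFun [IsProbabilityMeasure μ] {X X' U U' : Ω → ℝ}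
    (h : IndepFun (fun ω => (X ω, X' ω)) (fun ω => (U ω, U' ω)) μ)
    (hX : MemLp X 2 μ) (hX' : MemLp X' 2 μ) (hU : MemLp U 2 μ) (hU' : MemLp U' 2 μ) :
    cov[fun ω => X ω * U ω, fun ω => X' ω * U' ω; μ]
      = cov[X, X'; μ] * cov[U, U'; μ] + cov[X, X'; μ] * (μ[U] * μ[U'])
        + μ[X] * μ[X'] * cov[U, U'; μ] := by
  have hXU : IndepFun X U μ := h.comp measurable_fst measurable_fst
  have hXU' : IndepFun X' U' μ := h.comp measurable_snd measurable_snd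
  have hprod : IndepFun (fun ω => X ω * X' ω) (fun ω => U ω * U' ω) μ :=
    h.comp (measurable_fst.mul measurable_snd) (measurable_fst.mul measurable_snd)
  have hfactor : μ[(fun ω => X ω * U ω) * fun ω => X' ω * U' ω]
      = (∫ ω, X ω * X' ω ∂μ) * ∫ ω, U ω * U' ω ∂μ := by
    rw [← hprod.integral_fun_mul_eq_mul_integral
      (hX.aestronglyMeasurable.mul hX'.aestronglyMeasurable)
      (hU.aestronglyMeasurable.mul hU'.aestronglyMeasurable)]
    congr 1 with ω
    simp only [Pi.mul_apply]
    ring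
  rw [covariance_eq_sub (hXU.memLp_two_mul hX hU) (hXU'.memLp_two_mul hX' hU'),
    covariance_eq_sub hX hX', covariance_eq_sub hU hU', hfactor,
    hXU.integral_fun_mul_eq_mul_integral hX.aestronglyMeasurable hU.aestronglyMeasurable,
    hXU'.integral_fun_mul_eq_mul_integral hX'.aestronglyMeasurable hU'.aestronglyMeasurable]
  simp only [Pi.mul_apply]
  ring

end IndependentProducts

section UStatistic

variable {Ω ι : Type*} [MeasurableSpace Ω] {μ : Measure Ω} [DecidableEq ι]
  {H : ι → ι → Ω → ℝ} {ζ₁ ζ₂ : ℝ}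

/-- For `a ≠ b` and `c ≠ d` this is `ζ₂`, `ζ₁` or `0` according as `{a, b}` and `{c, d}` share
two, one or no indices. -/
def overlapCov (ζ₁ ζ₂ : ℝ) (a b c d : ι) : ℝ :=
  ((if c = a then 1 else 0) + (if c = b then 1 else 0) + (if d = a then 1 else 0)
    + (if d = b then 1 else 0)) * ζ₁
  + ((if c = a ∧ d = b then 1 else 0) + (if c = b ∧ d = a then 1 else 0)) * (ζ₂ - 2 * ζ₁)

theorem covariance_eq_overlapCov
    (hsymm : ∀ a b, H a b = H b a)
    (hζ₂ : ∀ a b, a ≠ b → cov[H a b, H a b; μ] = ζ₂)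
    (hζ₁ : ∀ a b c, a ≠ b → a ≠ c → b ≠ c → cov[H a b, H a c; μ] = ζ₁)
    (hζ₀ : ∀ a b c d, a ≠ b → c ≠ d → a ≠ c → a ≠ d → b ≠ c → b ≠ d → cov[H a b, H c d; μ] = 0)
    {a b c d : ι} (hab : a ≠ b) (hcd : c ≠ d) :
    cov[H a b, H c d; μ] = overlapCov ζ₁ ζ₂ a b c d := by
  unfold overlapCov
  rcases eq_or_ne c a with rfl | hca
  · rcases eq_or_ne d b with rfl | hdb
    · simp only [hζ₂ c d hab, hab, hab.symm, ↓reduceIte, add_zero, and_self, one_mul]; ring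
    · simp [hζ₁ c b d hab hcd hdb.symm, hab, hcd.symm, hdb]
  rcases eq_or_ne c b with rfl | hcb
  · rcases eq_or_ne d a with rfl | hda
    · rw [hsymm c d, hζ₂ d c hab]
      simp only [hab, hab.symm, ↓reduceIte, zero_add, add_zero, and_self, one_mul]; ring
    · rw [hsymm a c, hζ₁ c a d hab.symm hcd (Ne.symm hda)]; simp [hca, hda, hcd.symm]
  rcases eq_or_ne d a with rfl | hda
  · rw [hsymm c d, hζ₁ d b c hab (Ne.symm hca) (Ne.symm hcb)]; simp [hca, hcb, hab]
  rcases eq_or_ne d b with rfl | hdb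
  · rw [hsymm a d, hsymm c d, hζ₁ d a c hab.symm (Ne.symm hcb) (Ne.symm hca)]
    simp [hca, hcb, hda]
  rw [hζ₀ a b c d hab hcd (Ne.symm hca) (Ne.symm hda) (Ne.symm hcb) (Ne.symm hdb)]
  simp [hca, hcb, hda, hdb]

theorem sum_overlapCov [Fintype ι] {a b : ι} (hab : a ≠ b) :
    ∑ c, ∑ d ∈ univ.filter (· ≠ c), overlapCov ζ₁ ζ₂ a b c d
      = 2 * ζ₂ + 4 * ((Fintype.card ι : ℝ) - 2) * ζ₁ := by
  simp only [overlapCov, filter_ne', sum_erase_eq_sub (mem_univ _), sum_sub_distrib]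
  simp only [ite_and, sum_add_distrib, ← sum_mul, sum_const, card_univ, smul_ite, nsmul_eq_mul,
    mul_one, mul_zero, sum_ite_eq', mem_univ, ↓reduceIte, sum_ite_irrel, hab, hab.symm,
    add_zero, zero_mul]
  ring

theorem variance_sum_offDiag_eq [Fintype ι] [IsFiniteMeasure μ]
    (hL2 : ∀ a b, a ≠ b → MemLp (H a b) 2 μ)
    (hsymm : ∀ a b, H a b = H b a)
    (hζ₂ : ∀ a b, a ≠ b → cov[H a b, H a b; μ] = ζ₂)
    (hζ₁ : ∀ a b c, a ≠ b → a ≠ c → b ≠ c → cov[H a b, H a c; μ] = ζ₁)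
    (hζ₀ : ∀ a b c d, a ≠ b → c ≠ d → a ≠ c → a ≠ d → b ≠ c → b ≠ d → cov[H a b, H c d; μ] = 0) :
    Var[fun ω => ∑ a, ∑ b ∈ univ.filter (· ≠ a), H a b ω; μ]
      = Fintype.card ι * (Fintype.card ι - 1) * (2 * ζ₂ + 4 * (Fintype.card ι - 2) * ζ₁) := by
  have hmem : ∀ a : ι, ∀ b ∈ univ.filter (· ≠ a), a ≠ b := fun a b hb =>
    (mem_filter.1 hb).2.symm
  have hrow : ∀ a, MemLp (fun ω => ∑ b ∈ univ.filter (· ≠ a), H a b ω) 2 μ := fun a =>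
    memLp_finsetSum _ fun b hb => hL2 a b (hmem a b hb)
  rw [← covariance_self (memLp_finsetSum _ fun a _ => hrow a).aemeasurable,
    covariance_fun_sum_fun_sum' (fun a _ => hrow a) (fun a _ => hrow a)]
  calc ∑ a, ∑ c, cov[fun ω => ∑ b ∈ univ.filter (· ≠ a), H a b ω,
        fun ω => ∑ d ∈ univ.filter (· ≠ c), H c d ω; μ]
      = ∑ a, ∑ b ∈ univ.filter (· ≠ a), (2 * ζ₂ + 4 * ((Fintype.card ι : ℝ) - 2) * ζ₁) := by
        refine sum_congr rfl fun a _ => ?_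
        simp_rw [covariance_fun_sum_fun_sum' (fun b hb => hL2 a b (hmem a b hb))
          (fun d hd => hL2 _ d (hmem _ d hd))]
        rw [sum_comm]
        refine sum_congr rfl fun b hb => ?_
        rw [← sum_overlapCov (hmem a b hb)]
        exact sum_congr rfl fun c _ => sum_congr rfl fun d hd =>
          covariance_eq_overlapCov hsymm hζ₂ hζ₁ hζ₀ (hmem a b hb) (hmem c d hd)
    _ = _ := by
        simp only [filter_ne', sum_erase_eq_sub (mem_univ _), sum_sub_distrib, sum_const,
          card_univ, nsmul_eq_mul]
        ring

end UStatistic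

section InnerProductKernel

variable {Ω ι B : Type*} [MeasurableSpace Ω] {μ : Measure Ω} [Fintype B]
  {Y : ι → Ω → B → ℝ} {m : B → ℝ} {C : B → B → ℝ}

theorem memLp_two_sum_mul (hY : iIndepFun Y μ) (hL2 : ∀ i j, MemLp (fun ω => Y i ω j) 2 μ)
    {a b : ι} (hab : a ≠ b) : MemLp (fun ω => ∑ j, Y a ω j * Y b ω j) 2 μ :=
  memLp_finsetSum _ fun j _ => ((hY.indepFun hab).comp (measurable_pi_apply j)
    (measurable_pi_apply j)).memLp_two_mul (hL2 a j) (hL2 b j)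

theorem covariance_sum_mul_of_disjoint (hY : iIndepFun Y μ) (hmeas : ∀ i, Measurable (Y i))
    (hL2 : ∀ i j, MemLp (fun ω => Y i ω j) 2 μ) {a b c d : ι}
    (hab : a ≠ b) (hcd : c ≠ d) (hac : a ≠ c) (had : a ≠ d) (hbc : b ≠ c) (hbd : b ≠ d) :
    cov[fun ω => ∑ j, Y a ω j * Y b ω j, fun ω => ∑ j, Y c ω j * Y d ω j; μ] = 0 :=
  ((hY.indepFun_prodMk_prodMk hmeas a b c d hac had hbc hbd).comp
    (φ := fun q : (B → ℝ) × (B → ℝ) => ∑ j, q.1 j * q.2 j)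
    (ψ := fun q : (B → ℝ) × (B → ℝ) => ∑ j, q.1 j * q.2 j) (by fun_prop) (by fun_prop)
    ).covariance_eq_zero (memLp_two_sum_mul hY hL2 hab) (memLp_two_sum_mul hY hL2 hcd)

variable [IsProbabilityMeasure μ]

theorem covariance_sum_mul_sum_mul (hY : iIndepFun Y μ) (hmeas : ∀ i, Measurable (Y i))
    (hL2 : ∀ i j, MemLp (fun ω => Y i ω j) 2 μ) (hmean : ∀ i j, μ[fun ω => Y i ω j] = m j)
    (hcov : ∀ i j j', cov[fun ω => Y i ω j, fun ω => Y i ω j'; μ] = C j j')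
    {a b c : ι} (hab : a ≠ b) (hac : a ≠ c) :
    cov[fun ω => ∑ j, Y a ω j * Y b ω j, fun ω => ∑ j, Y a ω j * Y c ω j; μ]
      = ∑ j, ∑ j', (C j j' * cov[fun ω => Y b ω j, fun ω => Y c ω j'; μ]
          + C j j' * (m j * m j') + m j * m j' * cov[fun ω => Y b ω j, fun ω => Y c ω j'; μ]) := by
  have hterm : ∀ d, a ≠ d → ∀ j, MemLp (fun ω => Y a ω j * Y d ω j) 2 μ := fun d had j =>
    ((hY.indepFun had).comp (measurable_pi_apply j) (measurable_pi_apply j)).memLp_two_mul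
      (hL2 a j) (hL2 d j)
  rw [covariance_fun_sum_fun_sum (hterm b hab) (hterm c hac)]
  refine sum_congr rfl fun j _ => sum_congr rfl fun j' _ => ?_
  have hind : IndepFun (fun ω => (Y a ω j, Y a ω j')) (fun ω => (Y b ω j, Y c ω j')) μ :=
    (hY.indepFun_prodMk hmeas b c a hab.symm hac.symm).symm.comp
      (φ := fun y : B → ℝ => (y j, y j')) (ψ := fun q : (B → ℝ) × (B → ℝ) => (q.1 j, q.2 j'))
      (by fun_prop) (by fun_prop)
  rw [covariance_mul_mul_of_indepFun hind (hL2 a j) (hL2 a j') (hL2 b j) (hL2 c j'), hcov,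
    hmean, hmean, hmean, hmean]

theorem covariance_sum_mul_self (hY : iIndepFun Y μ) (hmeas : ∀ i, Measurable (Y i))
    (hL2 : ∀ i j, MemLp (fun ω => Y i ω j) 2 μ) (hmean : ∀ i j, μ[fun ω => Y i ω j] = m j)
    (hcov : ∀ i j j', cov[fun ω => Y i ω j, fun ω => Y i ω j'; μ] = C j j')
    {a b : ι} (hab : a ≠ b) :
    cov[fun ω => ∑ j, Y a ω j * Y b ω j, fun ω => ∑ j, Y a ω j * Y b ω j; μ]
      = ∑ j, ∑ j', (C j j' ^ 2 + 2 * (C j j' * (m j * m j'))) := by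
  rw [covariance_sum_mul_sum_mul hY hmeas hL2 hmean hcov hab hab]
  simp only [hcov]
  exact sum_congr rfl fun j _ => sum_congr rfl fun j' _ => by ring

theorem covariance_sum_mul_of_ne (hY : iIndepFun Y μ) (hmeas : ∀ i, Measurable (Y i))
    (hL2 : ∀ i j, MemLp (fun ω => Y i ω j) 2 μ) (hmean : ∀ i j, μ[fun ω => Y i ω j] = m j)
    (hcov : ∀ i j j', cov[fun ω => Y i ω j, fun ω => Y i ω j'; μ] = C j j')
    {a b c : ι} (hab : a ≠ b) (hac : a ≠ c) (hbc : b ≠ c) :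
    cov[fun ω => ∑ j, Y a ω j * Y b ω j, fun ω => ∑ j, Y a ω j * Y c ω j; μ]
      = ∑ j, ∑ j', C j j' * (m j * m j') := by
  have hzero : ∀ j j', cov[fun ω => Y b ω j, fun ω => Y c ω j'; μ] = 0 := fun j j' =>
    ((hY.indepFun hbc).comp (measurable_pi_apply j) (measurable_pi_apply j')).covariance_eq_zero
      (hL2 b j) (hL2 c j')
  rw [covariance_sum_mul_sum_mul hY hmeas hL2 hmean hcov hab hac]
  simp only [hzero, mul_zero, zero_add, add_zero]

theorem variance_sum_offDiag_sum_mul [Fintype ι] [DecidableEq ι] (hY : iIndepFun Y μ)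
    (hmeas : ∀ i, Measurable (Y i)) (hL2 : ∀ i j, MemLp (fun ω => Y i ω j) 2 μ)
    (hmean : ∀ i j, μ[fun ω => Y i ω j] = m j)
    (hcov : ∀ i j j', cov[fun ω => Y i ω j, fun ω => Y i ω j'; μ] = C j j') :
    Var[fun ω => ∑ a, ∑ b ∈ univ.filter (· ≠ a), ∑ j, Y a ω j * Y b ω j; μ]
      = Fintype.card ι * (Fintype.card ι - 1) * (2 * ∑ j, ∑ j', C j j' ^ 2
          + 4 * (Fintype.card ι - 1) * ∑ j, ∑ j', C j j' * (m j * m j')) := by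
  rw [variance_sum_offDiag_eq (H := fun a b ω => ∑ j, Y a ω j * Y b ω j)
    (fun a b hab => memLp_two_sum_mul hY hL2 hab)
    (fun a b => funext fun ω => sum_congr rfl fun j _ => mul_comm _ _)
    (fun a b hab => covariance_sum_mul_self hY hmeas hL2 hmean hcov hab)
    (fun a b c hab hac hbc => covariance_sum_mul_of_ne hY hmeas hL2 hmean hcov hab hac hbc)
    (fun a b c d hab hcd hac had hbc hbd =>
      covariance_sum_mul_of_disjoint hY hmeas hL2 hab hcd hac had hbc hbd)]
  simp only [sum_add_distrib, ← mul_sum]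
  ring

end InnerProductKernel

section DiagonalMinusRankOne

variable {B : Type*} [Fintype B] [DecidableEq B]

theorem sum_sum_diag_sub_mul_mul (d p m : B → ℝ) :
    ∑ j, ∑ j', ((if j = j' then d j else 0) - p j * p j') * (m j * m j')
      = ∑ j, d j * m j ^ 2 - (∑ j, p j * m j) ^ 2 := by
  simp only [sub_mul, sum_sub_distrib, ite_mul, zero_mul, sum_ite_eq, mem_univ, if_true]
  rw [sq, sum_mul_sum]
  congr 1
  · exact sum_congr rfl fun j _ => by ring
  · exact sum_congr rfl fun j _ => sum_congr rfl fun j' _ => by ring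

theorem sum_sum_diag_sub_mul_sq (d p : B → ℝ) :
    ∑ j, ∑ j', ((if j = j' then d j else 0) - p j * p j') ^ 2
      = ∑ j, (d j ^ 2 - 2 * d j * p j ^ 2) + (∑ j, p j ^ 2) ^ 2 := by
  have hexpand : ∀ j j', ((if j = j' then d j else 0) - p j * p j') ^ 2
      = (if j = j' then d j ^ 2 - 2 * d j * p j ^ 2 else 0) + p j ^ 2 * p j' ^ 2 := by
    intro j j'
    split_ifs with h
    · subst h; ring
    · ring
  simp only [hexpand, sum_add_distrib, sum_ite_eq, mem_univ, if_true]
  rw [sq (∑ j, p j ^ 2), sum_mul_sum]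

end DiagonalMinusRankOne

section LaplaceCovariance

variable {B : Type*} [Fintype B] [DecidableEq B] {p : B → ℝ} {α : ℝ}

/-- The covariance matrix `diag p - p pᵀ` of a one-hot encoding of a `p`-distributed index,
plus independent `(2/α)·Laplace(1)` noise of variance `8/α²` in each coordinate. -/
noncomputable def laplaceCov (p : B → ℝ) (α : ℝ) (j j' : B) : ℝ :=
  (if j = j' then p j + 8 / α ^ 2 else 0) - p j * p j'

theorem sum_sum_laplaceCov_mul_le (hα : 0 < α) (hα1 : α ≤ 1) (hp0 : ∀ j, 0 ≤ p j)
    (hp1 : ∑ j, p j ≤ 1) (m : B → ℝ) :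
    ∑ j, ∑ j', laplaceCov p α j j' * (m j * m j') ≤ 9 / α ^ 2 * ∑ j, m j ^ 2 := by
  have hα2 : 1 ≤ 1 / α ^ 2 := one_le_one_div (by positivity) (pow_le_one₀ hα.le hα1)
  have hdiag : ∀ j, p j + 8 / α ^ 2 ≤ 9 / α ^ 2 := fun j => by
    have hpj : p j ≤ 1 := (single_le_sum (fun i _ => hp0 i) (mem_univ j)).trans hp1
    linarith [show 9 / α ^ 2 = 1 / α ^ 2 + 8 / α ^ 2 by ring]
  rw [show ∑ j, ∑ j', laplaceCov p α j j' * (m j * m j')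
      = ∑ j, (p j + 8 / α ^ 2) * m j ^ 2 - (∑ j, p j * m j) ^ 2
    from sum_sum_diag_sub_mul_mul _ p m, mul_sum]
  calc ∑ j, (p j + 8 / α ^ 2) * m j ^ 2 - (∑ j, p j * m j) ^ 2
      ≤ ∑ j, (p j + 8 / α ^ 2) * m j ^ 2 := sub_le_self _ (sq_nonneg _)
    _ ≤ ∑ j, 9 / α ^ 2 * m j ^ 2 :=
        sum_le_sum fun j _ => mul_le_mul_of_nonneg_right (hdiag j) (sq_nonneg _)

theorem sum_sum_laplaceCov_sq_le (hα : 0 < α) (hα1 : α ≤ 1) (hp0 : ∀ j, 0 ≤ p j)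
    (hp1 : ∑ j, p j ≤ 1) :
    ∑ j, ∑ j', laplaceCov p α j j' ^ 2 ≤ 82 * Fintype.card B / α ^ 4 := by
  have hple : ∀ j, p j ≤ 1 := fun j => (single_le_sum (fun i _ => hp0 i) (mem_univ j)).trans hp1
  have hsq : ∑ j, p j ^ 2 ≤ 1 := (sum_le_sum fun j _ => by nlinarith [hp0 j, hple j]).trans hp1
  have hα2 : 1 ≤ 1 / α ^ 2 := one_le_one_div (by positivity) (pow_le_one₀ hα.le hα1)
  have hentry : ∀ j, (p j + 8 / α ^ 2) ^ 2 + p j ^ 2 ≤ 82 / α ^ 4 := fun j => by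
    rw [show 8 / α ^ 2 = 8 * (1 / α ^ 2) by ring, show 82 / α ^ 4 = 82 * (1 / α ^ 2) ^ 2 by ring]
    nlinarith [hp0 j, hple j]
  rw [show ∑ j, ∑ j', laplaceCov p α j j' ^ 2
      = ∑ j, ((p j + 8 / α ^ 2) ^ 2 - 2 * (p j + 8 / α ^ 2) * p j ^ 2) + (∑ j, p j ^ 2) ^ 2
    from sum_sum_diag_sub_mul_sq _ p]
  calc ∑ j, ((p j + 8 / α ^ 2) ^ 2 - 2 * (p j + 8 / α ^ 2) * p j ^ 2) + (∑ j, p j ^ 2) ^ 2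
      ≤ ∑ j, ((p j + 8 / α ^ 2) ^ 2 + p j ^ 2) := by
        rw [sum_add_distrib]
        gcongr with j
        · nlinarith [hp0 j, show 0 ≤ 8 / α ^ 2 by positivity]
        · nlinarith [sum_nonneg fun j (_ : j ∈ univ) => sq_nonneg (p j)]
    _ ≤ ∑ _j : B, 82 / α ^ 4 := sum_le_sum fun j _ => hentry j
    _ = 82 * Fintype.card B / α ^ 4 := by rw [sum_const, card_univ, nsmul_eq_mul]; ring

end LaplaceCovariance

theorem stmt7_general {Ω : Type*} [MeasureSpace Ω] [IsProbabilityMeasure (ℙ : Measure Ω)]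
    (B : Type*) [Fintype B] [DecidableEq B] (n : ℕ) (hn : 2 ≤ n) (α : ℝ) (hα : 0 < α) (hα1 : α ≤ 1)
    (p p₀ : B → ℝ) (hp0 : ∀ j, 0 ≤ p j) (hp1 : ∑ j, p j ≤ 1)
    (Z : Fin n → Ω → B → ℝ)
    (hZmeas : ∀ i, Measurable (Z i))
    (hZL2 : ∀ i j, MemLp (fun ω => Z i ω j) 2 ℙ)
    (hindep : iIndepFun Z ℙ)
    (hmean : ∀ i j, ∫ ω, Z i ω j ∂ℙ = p j)
    (hcov : ∀ i j j', cov (fun ω => Z i ω j) (fun ω => Z i ω j')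
      = (if j = j' then p j + 8 / α ^ 2 else 0) - p j * p j') :
    variance (fun ω => (1 / ((n : ℝ) * (n - 1))) *
        ∑ i₁ : Fin n, ∑ i₂ ∈ Finset.univ.filter (fun i₂ => i₂ ≠ i₁),
          ∑ j : B, (Z i₁ ω j - p₀ j) * (Z i₂ ω j - p₀ j)) ℙ
      ≤ (36 / ((n : ℝ) * α ^ 2)) * ∑ j : B, (p j - p₀ j) ^ 2
        + 164 * (Fintype.card B : ℝ) / ((n : ℝ) * (n - 1) * α ^ 4) := by
  set Y : Fin n → Ω → B → ℝ := fun i ω j => Z i ω j - p₀ j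
  have hY : iIndepFun Y ℙ := hindep.comp (fun _ z j => z j - p₀ j) fun _ => by fun_prop
  have hYmeas : ∀ i, Measurable (Y i) := fun i => by have := hZmeas i; fun_prop
  have hYL2 : ∀ i j, MemLp (fun ω => Y i ω j) 2 ℙ := fun i j => (hZL2 i j).sub (memLp_const _)
  have hYmean : ∀ i j, ℙ[fun ω => Y i ω j] = p j - p₀ j := fun i j => by
    rw [integral_sub ((hZL2 i j).integrable one_le_two) (integrable_const _), hmean]
    simp
  have hYcov : ∀ i j j', cov[fun ω => Y i ω j, fun ω => Y i ω j'; ℙ] = laplaceCov p α j j' :=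
    fun i j j' => by
      rw [covariance_sub_const_left ((hZL2 i j).integrable one_le_two),
        covariance_sub_const_right ((hZL2 i j').integrable one_le_two), ← cov_eq_covariance, hcov,
        laplaceCov]
  rw [variance_const_mul, variance_sum_offDiag_sum_mul hY hYmeas hYL2 hYmean hYcov,
    Fintype.card_fin]
  set T := ∑ j, ∑ j', laplaceCov p α j j' ^ 2
  set ζ₁ := ∑ j, ∑ j', laplaceCov p α j j' * ((p j - p₀ j) * (p j' - p₀ j'))
  have hT : T ≤ 82 * Fintype.card B / α ^ 4 := sum_sum_laplaceCov_sq_le hα hα1 hp0 hp1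
  have hζ₁ : ζ₁ ≤ 9 / α ^ 2 * ∑ j, (p j - p₀ j) ^ 2 := sum_sum_laplaceCov_mul_le hα hα1 hp0 hp1 _
  have hN : (2 : ℝ) ≤ n := by exact_mod_cast hn
  have hNN : (0 : ℝ) < n * (n - 1) := by nlinarith
  calc (1 / ((n : ℝ) * (n - 1))) ^ 2 * (n * (n - 1) * (2 * T + 4 * (n - 1) * ζ₁))
      = 2 * T / (n * (n - 1)) + 4 / n * ζ₁ := by field_simp [show (n : ℝ) - 1 ≠ 0 by linarith]
    _ ≤ 2 * (82 * Fintype.card B / α ^ 4) / (n * (n - 1))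
          + 4 / n * (9 / α ^ 2 * ∑ j, (p j - p₀ j) ^ 2) := by gcongr
    _ = _ := by field_simp; ring

/-- For i.i.d. random vectors `Z i : Ω → B → ℝ` with
`E[Z i j] = p j` and `Cov(Z i j, Z i j') = 1_{j=j'}(p j + 8/α²) − p j p j'`,
the U-statistic `S_B = (1/(n(n−1))) ∑_{i₁≠i₂} ∑_{j∈B} (Z i₁ j − p₀ j)(Z i₂ j − p₀ j)`
satisfies `Var(S_B) ≤ (36/(nα²)) ∑_j (p j − p₀ j)² + 164 |B| /(n(n−1)α⁴)`. -/
theorem stmt7 {Ω : Type*} [MeasureSpace Ω] [IsProbabilityMeasure (ℙ : Measure Ω)]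
    (B : Type*) [Fintype B] [DecidableEq B] (n : ℕ) (hn : 2 ≤ n) (α : ℝ) (hα : 0 < α) (hα1 : α ≤ 1)
    (p p₀ : B → ℝ) (hp0 : ∀ j, 0 ≤ p j) (hp1 : ∑ j, p j ≤ 1)
    (hp₀0 : ∀ j, 0 ≤ p₀ j) (hp₀1 : ∑ j, p₀ j ≤ 1)
    (Z : Fin n → Ω → B → ℝ)
    (hZmeas : ∀ i, Measurable (Z i))
    (hZL2 : ∀ i j, MemLp (fun ω => Z i ω j) 2 ℙ)
    (hindep : iIndepFun Z ℙ)
    (hid : ∀ i i', IdentDistrib (Z i) (Z i') ℙ ℙ)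
    (hmean : ∀ i j, ∫ ω, Z i ω j ∂ℙ = p j)
    (hcov : ∀ i j j', cov (fun ω => Z i ω j) (fun ω => Z i ω j')
      = (if j = j' then p j + 8 / α ^ 2 else 0) - p j * p j') :
    variance (fun ω => (1 / ((n : ℝ) * (n - 1))) *
        ∑ i₁ : Fin n, ∑ i₂ ∈ Finset.univ.filter (fun i₂ => i₂ ≠ i₁),
          ∑ j : B, (Z i₁ ω j - p₀ j) * (Z i₂ ω j - p₀ j)) ℙ
      ≤ (36 / ((n : ℝ) * α ^ 2)) * ∑ j : B, (p j - p₀ j) ^ 2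
        + 164 * (Fintype.card B : ℝ) / ((n : ℝ) * (n - 1) * α ^ 4) :=
  stmt7_general B n hn α hα hα1 p p₀ hp0 hp1 Z hZmeas hZL2 hindep hmean hcov
end

section
/- Suppose a random variable p̂ satisfies the concentration inequality P(|p̂ − p| ≥ v) ≤ 4 exp(−nα² v²/32) for all v > 0, and let τ = (nα²)^{−1/2}. If p − p₀ ≥ 2τ, then Var([p̂ − p₀]_{−τ}^{τ}) ≤ (16/(nα²)) exp(−nα²(p−p₀)²/128). -/
/-!
Writing `C` for the clipped variable, `C ∈ [-τ, τ]` and `Var C ≤ E[(τ - C)²] ≤ 4τ² P(C < τ)`,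
because `τ - C ∈ [0, 2τ]` vanishes unless `C < τ`. When `p - p₀ ≥ 2τ`, the event `C < τ` forces
`p̂ - p₀ < τ`, hence `|p̂ - p| ≥ (p - p₀)/2`, whose probability is at most
`4 exp(-nα²(p - p₀)²/128)` by the concentration inequality; finally `τ² = 1/(nα²)`.
-/

open MeasureTheory ProbabilityTheory Real

namespace ProbabilityTheory

variable {Ω : Type*} {m : MeasurableSpace Ω} {μ : Measure Ω} [IsProbabilityMeasure μ]

lemma variance_le_sq_mul_measureReal_lt {a b : ℝ} {X : Ω → ℝ} (hX : Measurable X)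
    (h : ∀ᵐ ω ∂μ, X ω ∈ Set.Icc a b) :
    variance X μ ≤ (b - a) ^ 2 * μ.real {ω | X ω < b} := by
  have hlt : MeasurableSet {ω | X ω < b} := measurableSet_lt hX measurable_const
  have hpt : ∀ᵐ ω ∂μ, (X ω - b) ^ 2 ≤ {ω | X ω < b}.indicator (fun _ => (b - a) ^ 2) ω := by
    filter_upwards [h] with ω ⟨ha, hb⟩
    by_cases hω : X ω < b
    · rw [Set.indicator_of_mem (s := {ω | X ω < b}) hω]
      nlinarith
    · rw [Set.indicator_of_notMem (s := {ω | X ω < b}) hω, le_antisymm hb (not_lt.mp hω),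
        sub_self]
      norm_num
  have hint : Integrable (fun ω => (X ω - b) ^ 2) μ := by
    refine (integrable_const ((b - a) ^ 2)).mono' (by fun_prop) ?_
    filter_upwards [h] with ω ⟨ha, hb⟩
    rw [Real.norm_eq_abs, abs_of_nonneg (sq_nonneg _)]
    nlinarith
  calc variance X μ = variance (fun ω => X ω - b) μ :=
        (variance_sub_const hX.aestronglyMeasurable b).symm
    _ ≤ ∫ ω, (X ω - b) ^ 2 ∂μ := variance_le_expectation_sq (by fun_prop)
    _ ≤ ∫ ω, {ω | X ω < b}.indicator (fun _ => (b - a) ^ 2) ω ∂μ :=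
        integral_mono_ae hint ((integrable_const _).indicator hlt) hpt
    _ = (b - a) ^ 2 * μ.real {ω | X ω < b} := by
        rw [integral_indicator_const _ hlt, smul_eq_mul, mul_comm]

end ProbabilityTheory

lemma Real.rpow_neg_half_sq {x : ℝ} (hx : 0 ≤ x) : (x ^ (-(1 / 2 : ℝ))) ^ 2 = x⁻¹ := by
  rw [← Real.rpow_natCast, ← Real.rpow_mul hx]
  norm_num [Real.rpow_neg_one]

lemma max_min_mem_Icc {α : Type*} [LinearOrder α] {a b : α} (hab : a ≤ b) (x : α) :
    max a (min x b) ∈ Set.Icc a b :=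
  ⟨le_max_left _ _, max_le hab (min_le_right _ _)⟩

lemma lt_of_max_min_lt {α : Type*} [LinearOrder α] {a b x : α} (h : max a (min x b) < b) :
    x < b := by
  simpa using (max_lt_iff.mp h).2

/-- If `p̂` satisfies `P(|p̂ − p| ≥ v) ≤ 4 exp(−nα²v²/32)` for all
`v > 0`, `τ = (nα²)^{−1/2}` and `p − p₀ ≥ 2τ`, then
`Var([p̂ − p₀]_{−τ}^{τ}) ≤ (16/(nα²)) exp(−nα²(p−p₀)²/128)`. -/
theorem stmt9 {Ω : Type*} [MeasureSpace Ω] [IsProbabilityMeasure (ℙ : Measure Ω)]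
    (n : ℕ) (hn : 0 < n) (α : ℝ) (hα : 0 < α)
    (phat : Ω → ℝ) (hmeas : Measurable phat) (p p₀ τ : ℝ)
    (hτ : τ = ((n : ℝ) * α ^ 2) ^ (-(1 / 2 : ℝ)))
    (hconc : ∀ v > 0, (ℙ {ω | v ≤ |phat ω - p|}).toReal
      ≤ 4 * Real.exp (-(n : ℝ) * α ^ 2 * v ^ 2 / 32))
    (hgap : p - p₀ ≥ 2 * τ) :
    variance (fun ω => max (-τ) (min (phat ω - p₀) τ)) ℙ
      ≤ (16 / ((n : ℝ) * α ^ 2)) *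
        Real.exp (-(n : ℝ) * α ^ 2 * (p - p₀) ^ 2 / 128) := by
  have hnα : 0 < (n : ℝ) * α ^ 2 := by positivity
  have hτpos : 0 < τ := hτ ▸ Real.rpow_pos_of_pos hnα _
  have hτsq : τ ^ 2 = ((n : ℝ) * α ^ 2)⁻¹ := hτ ▸ Real.rpow_neg_half_sq hnα.le
  have htail : (ℙ : Measure Ω).real {ω | max (-τ) (min (phat ω - p₀) τ) < τ}
      ≤ 4 * Real.exp (-(n : ℝ) * α ^ 2 * (p - p₀) ^ 2 / 128) :=
    calc _ ≤ (ℙ : Measure Ω).real {ω | (p - p₀) / 2 ≤ |phat ω - p|} := by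
          refine measureReal_mono fun ω hω => ?_
          have hlow : phat ω - p₀ < τ := lt_of_max_min_lt hω
          show (p - p₀) / 2 ≤ |phat ω - p|
          exact le_abs.mpr (Or.inr (by linarith))
      _ ≤ 4 * Real.exp (-(n : ℝ) * α ^ 2 * ((p - p₀) / 2) ^ 2 / 32) :=
          hconc _ (by linarith)
      _ = 4 * Real.exp (-(n : ℝ) * α ^ 2 * (p - p₀) ^ 2 / 128) := by ring_nf
  calc _ ≤ (τ - -τ) ^ 2 * (ℙ : Measure Ω).real {ω | max (-τ) (min (phat ω - p₀) τ) < τ} :=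
        variance_le_sq_mul_measureReal_lt (by fun_prop)
          (ae_of_all _ fun ω => max_min_mem_Icc (by linarith) _)
    _ ≤ (τ - -τ) ^ 2 * (4 * Real.exp (-(n : ℝ) * α ^ 2 * (p - p₀) ^ 2 / 128)) := by gcongr
    _ = _ := by rw [sub_neg_eq_add, ← two_mul, mul_pow, hτsq]; field_simp; ring
end

section
/- Let p ∈ [0,1]^d be a probability vector, p₀ ∈ [0,1]^d another probability vector, τ > 0, and define D_τ(p) = Σ_{j=1}^d |p(j)−p₀(j)| · min(τ, |p(j)−p₀(j)|). Then D_τ(p) ≥ min(‖p−p₀‖₂², τ ‖p−p₀‖₂). -/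
open Real Finset

/-!
Put `r = ‖p - p₀‖₂`, so every coordinate satisfies `|p j - p₀ j| ≤ r`. If `r ≤ τ`, each minimum
is `|p j - p₀ j|` and `D_τ(p) = r²`. Otherwise `τ < r`, and then `τ b ≤ r · min τ b` for every
`0 ≤ b ≤ r`; applied to `b = |p j - p₀ j|` and summed, this gives `τ r² ≤ r · D_τ(p)`.
-/

lemma mul_le_mul_min {a b r : ℝ} (ha : 0 ≤ a) (hb : 0 ≤ b) (har : a ≤ r) (hbr : b ≤ r) :
    a * b ≤ r * min a b := by
  rcases le_total a b with hab | hba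
  · rw [min_eq_left hab, mul_comm r]
    exact mul_le_mul_of_nonneg_left hbr ha
  · rw [min_eq_right hba]
    exact mul_le_mul_of_nonneg_right har hb

lemma abs_le_sqrt_sum_sq {ι : Type*} {s : Finset ι} {f : ι → ℝ} {i : ι} (hi : i ∈ s) :
    |f i| ≤ √(∑ j ∈ s, f j ^ 2) :=
  Real.abs_le_sqrt (single_le_sum (fun j _ => sq_nonneg (f j)) hi)

theorem min_sum_sq_le_sum_abs_mul_min {ι : Type*} (s : Finset ι) (f : ι → ℝ) {τ : ℝ}
    (hτ : 0 ≤ τ) :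
    min (∑ i ∈ s, f i ^ 2) (τ * √(∑ i ∈ s, f i ^ 2)) ≤ ∑ i ∈ s, |f i| * min τ |f i| := by
  set r := √(∑ i ∈ s, f i ^ 2)
  have hr : ∀ i ∈ s, |f i| ≤ r := fun i hi => abs_le_sqrt_sum_sq hi
  rcases le_or_gt r τ with hrτ | hτr
  · refine (min_le_left _ _).trans_eq (sum_congr rfl fun i hi => ?_)
    rw [min_eq_right ((hr i hi).trans hrτ), abs_mul_abs_self, sq]
  · have hr0 : 0 < r := hτ.trans_lt hτr
    have hpoint : ∀ i ∈ s, τ * f i ^ 2 ≤ r * (|f i| * min τ |f i|) := fun i hi => by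
      calc τ * f i ^ 2 = |f i| * (τ * |f i|) := by rw [← sq_abs]; ring
        _ ≤ |f i| * (r * min τ |f i|) :=
          mul_le_mul_of_nonneg_left
            (mul_le_mul_min hτ (abs_nonneg _) hτr.le (hr i hi)) (abs_nonneg _)
        _ = r * (|f i| * min τ |f i|) := by ring
    have hsum : τ * r * r ≤ r * ∑ i ∈ s, |f i| * min τ |f i| := by
      rw [mul_assoc, mul_self_sqrt (sum_nonneg fun i _ => sq_nonneg (f i)), mul_sum, mul_sum]
      exact sum_le_sum hpoint
    refine (min_le_right _ _).trans (le_of_mul_le_mul_left ?_ hr0)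
    linarith

theorem stmt12_general (d : ℕ) (τ : ℝ) (hτ : 0 < τ)
    (p p₀ : Fin d → ℝ) :
    ∑ j, |p j - p₀ j| * min τ |p j - p₀ j|
      ≥ min (∑ j, (p j - p₀ j) ^ 2)
          (τ * Real.sqrt (∑ j, (p j - p₀ j) ^ 2)) :=
  min_sum_sq_le_sum_abs_mul_min univ (fun j => p j - p₀ j) hτ.le

/-- For probability vectors `p, p₀` on `[d]` and `τ > 0`, the
quantity `D_τ(p) = ∑_j |p j − p₀ j| min(τ, |p j − p₀ j|)` satisfies
`D_τ(p) ≥ min(‖p−p₀‖₂², τ‖p−p₀‖₂)`. -/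
theorem stmt12 (d : ℕ) (τ : ℝ) (hτ : 0 < τ)
    (p p₀ : Fin d → ℝ)
    (hp0 : ∀ j, 0 ≤ p j) (hp1 : ∀ j, p j ≤ 1) (hps : ∑ j, p j = 1)
    (hq0 : ∀ j, 0 ≤ p₀ j) (hq1 : ∀ j, p₀ j ≤ 1) (hqs : ∑ j, p₀ j = 1) :
    ∑ j, |p j - p₀ j| * min τ |p j - p₀ j|
      ≥ min (∑ j, (p j - p₀ j) ^ 2)
          (τ * Real.sqrt (∑ j, (p j - p₀ j) ^ 2)) :=
  stmt12_general d τ hτ p p₀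
end

section
/- Let p₀(j) = c_d^{-1} j^{−1−β} for j = 1,…,d with β > 0 and normalizing constant c_d = Σ_{ℓ=1}^d ℓ^{−1−β}. For C = 2(1 − 2^{−β})^{−1/(β+3/4)} and any n, α with 1 ≤ nα² ≤ (d/C)^{2β+3/2}, setting j = ⌈C (nα²)^{1/(2β+3/2)}⌉, one has Σ_{ℓ=j+1}^d p₀(ℓ) ≤ j^{3/4}/(nα²)^{1/2}. -/
/-!
Telescoping `ℓ^{-(1+β)} ≤ ((ℓ-1)^{-β} - ℓ^{-β})/β` bounds the unnormalised tail beyond `j` by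
`j^{-β}/β`, and `c_d ≥ 1`, so the tail mass is at most `j^{-β}/β ≤ j^{-β}/(1 - 2^{-β})`.
The choice of `j` gives `j^{β+3/4} ≥ C^{β+3/4} (nα²)^{1/2} ≥ (nα²)^{1/2}/(1 - 2^{-β})`,
which is the claimed bound after multiplying by `j^{-β}`.
-/

open Real Finset

lemma one_add_mul_one_sub_le_rpow_neg {t β : ℝ} (ht : 0 < t) (hβ : 0 ≤ β) :
    1 + β * (1 - t) ≤ t ^ (-β) := by
  calc 1 + β * (1 - t) ≤ log t * -β + 1 := by nlinarith [log_le_sub_one_of_pos ht]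
    _ ≤ exp (log t * -β) := add_one_le_exp _
    _ = t ^ (-β) := (rpow_def_of_pos ht _).symm

lemma one_sub_two_rpow_neg_le {β : ℝ} (hβ : 0 ≤ β) : 1 - 2 ^ (-β) ≤ β := by
  linarith [one_add_mul_one_sub_le_rpow_neg two_pos hβ]

/-- The discrete form of `∫_{x-1}^x β t^{-1-β} dt ≥ β x^{-1-β}`. -/
lemma mul_rpow_neg_one_sub_le_sub {x β : ℝ} (hx : 1 < x) (hβ : 0 ≤ β) :
    β * x ^ (-(1 + β)) ≤ (x - 1) ^ (-β) - x ^ (-β) := by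
  have hx₀ : 0 < x := by linarith
  have ht : 0 < 1 - x⁻¹ := sub_pos.2 (inv_lt_one_of_one_lt₀ hx)
  have hsplit : (x - 1) ^ (-β) = x ^ (-β) * (1 - x⁻¹) ^ (-β) := by
    rw [← mul_rpow hx₀.le ht.le, mul_sub, mul_inv_cancel₀ hx₀.ne', mul_one]
  have hpow : x ^ (-(1 + β)) = x ^ (-β) * x⁻¹ := by
    rw [neg_add, rpow_add hx₀, rpow_neg_one, mul_comm]
  have hbound := one_add_mul_one_sub_le_rpow_neg ht hβ
  rw [sub_sub_cancel] at hbound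
  rw [hsplit, hpow]
  nlinarith [rpow_pos_of_pos hx₀ (-β)]

lemma mul_sum_Icc_rpow_neg_le {β : ℝ} (hβ : 0 ≤ β) {j : ℕ} (hj : 1 ≤ j) {d : ℕ} (hjd : j ≤ d) :
    β * ∑ ℓ ∈ Icc (j + 1) d, (ℓ : ℝ) ^ (-(1 + β)) ≤ (j : ℝ) ^ (-β) - (d : ℝ) ^ (-β) := by
  induction d, hjd using Nat.le_induction with
  | base => simp
  | succ m hjm ih =>
    have hm : (1 : ℝ) < m + 1 := by
      have : (1 : ℝ) ≤ m := by exact_mod_cast hj.trans hjm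
      linarith
    have hstep := mul_rpow_neg_one_sub_le_sub hm hβ
    rw [add_sub_cancel_right] at hstep
    rw [sum_Icc_succ_top (by omega), mul_add]
    push_cast
    linarith

lemma sum_Icc_rpow_neg_le {β : ℝ} (hβ : 0 < β) {j : ℕ} (hj : 1 ≤ j) (d : ℕ) :
    ∑ ℓ ∈ Icc (j + 1) d, (ℓ : ℝ) ^ (-(1 + β)) ≤ (j : ℝ) ^ (-β) / β := by
  rcases le_or_gt j d with hjd | hdj
  · rw [le_div_iff₀ hβ, mul_comm]
    have := mul_sum_Icc_rpow_neg_le hβ.le hj hjd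
    linarith [rpow_nonneg (Nat.cast_nonneg d) (-β)]
  · rw [Icc_eq_empty (by omega), sum_empty]
    positivity

lemma sum_Icc_div_sum_Icc_one_le {f : ℕ → ℝ} (hf : ∀ ℓ, 0 ≤ f ℓ) (hf₁ : 1 ≤ f 1) (j d : ℕ) :
    (∑ ℓ ∈ Icc (j + 1) d, f ℓ) / ∑ ℓ ∈ Icc 1 d, f ℓ ≤ ∑ ℓ ∈ Icc (j + 1) d, f ℓ := by
  rcases Nat.eq_zero_or_pos d with rfl | hd
  · simp
  · refine div_le_self (sum_nonneg fun ℓ _ => hf ℓ) (hf₁.trans ?_)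
    exact single_le_sum (fun ℓ _ => hf ℓ) (mem_Icc.2 ⟨le_rfl, hd⟩)

lemma rpow_half_le_mul_rpow_of_le {A D γ c x : ℝ} (hA : 0 < A) (hD : 0 < D) (hγ : 0 < γ)
    (hc : 1 ≤ c)     (hx : c * D ^ (-(1 / γ)) * A ^ (1 / (2 * γ)) ≤ x) :
    A ^ (1 / 2 : ℝ) ≤ D * x ^ γ := by
  have hpow : (c * D ^ (-(1 / γ)) * A ^ (1 / (2 * γ))) ^ γ = c ^ γ * D⁻¹ * A ^ (1 / 2 : ℝ) := by
    rw [mul_rpow (by positivity) (by positivity), mul_rpow (by positivity) (by positivity),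
      ← rpow_mul hD.le, ← rpow_mul hA.le, neg_mul, one_div_mul_cancel hγ.ne', rpow_neg_one]
    congr 2
    field_simp
  have hle := rpow_le_rpow (by positivity) hx hγ.le
  rw [hpow] at hle
  have hcγ : 1 ≤ c ^ γ := one_le_rpow hc hγ.le
  have hA' : 0 ≤ A ^ (1 / 2 : ℝ) := by positivity
  calc A ^ (1 / 2 : ℝ) ≤ c ^ γ * A ^ (1 / 2 : ℝ) := le_mul_of_one_le_left hA' hcγ
    _ = D * (c ^ γ * D⁻¹ * A ^ (1 / 2 : ℝ)) := by field_simp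
    _ ≤ D * x ^ γ := by gcongr

theorem stmt16_general (β : ℝ) (hβ : 0 < β) (d n : ℕ) (α : ℝ)
    (C : ℝ) (hC : C = 2 * (1 - 2 ^ (-β)) ^ (-(1 / (β + 3 / 4))))
    (h1 : 1 ≤ (n : ℝ) * α ^ 2)
    (j : ℕ) (hj : j = ⌈C * ((n : ℝ) * α ^ 2) ^ (1 / (2 * β + 3 / 2))⌉₊) :
    ∑ ℓ ∈ Finset.Icc (j + 1) d,
        ((ℓ : ℝ) ^ (-(1 + β)) / ∑ ℓ' ∈ Finset.Icc 1 d, (ℓ' : ℝ) ^ (-(1 + β)))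
      ≤ (j : ℝ) ^ ((3 : ℝ) / 4) / ((n : ℝ) * α ^ 2) ^ ((1 : ℝ) / 2) := by
  set A := (n : ℝ) * α ^ 2
  set D : ℝ := 1 - 2 ^ (-β)
  have hA : 0 < A := by linarith
  have hD : 0 < D := sub_pos.2 (rpow_lt_one_of_one_lt_of_neg one_lt_two (neg_neg_of_pos hβ))
  have hCA : C * A ^ (1 / (2 * β + 3 / 2)) ≤ j := hj ▸ Nat.le_ceil _
  have hj₀ : 0 < j := hj ▸ Nat.ceil_pos.2 (by rw [hC]; positivity)
  have hjA : A ^ (1 / 2 : ℝ) ≤ D * (j : ℝ) ^ (β + 3 / 4) := by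
    refine rpow_half_le_mul_rpow_of_le hA hD (by positivity) one_le_two ?_
    rwa [← hC, show 2 * (β + 3 / 4) = 2 * β + 3 / 2 by ring]
  rw [← sum_div]
  calc (∑ ℓ ∈ Icc (j + 1) d, (ℓ : ℝ) ^ (-(1 + β))) / ∑ ℓ ∈ Icc 1 d, (ℓ : ℝ) ^ (-(1 + β))
      ≤ ∑ ℓ ∈ Icc (j + 1) d, (ℓ : ℝ) ^ (-(1 + β)) :=
        sum_Icc_div_sum_Icc_one_le (fun ℓ => rpow_nonneg (Nat.cast_nonneg ℓ) _) (by simp) j d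
    _ ≤ (j : ℝ) ^ (-β) / β := sum_Icc_rpow_neg_le hβ hj₀ d
    _ ≤ (j : ℝ) ^ (-β) / D := by gcongr; exact one_sub_two_rpow_neg_le hβ.le
    _ ≤ (j : ℝ) ^ ((3 : ℝ) / 4) / A ^ ((1 : ℝ) / 2) := by
        rw [div_le_div_iff₀ hD (by positivity)]
        calc (j : ℝ) ^ (-β) * A ^ (1 / 2 : ℝ) ≤ (j : ℝ) ^ (-β) * (D * (j : ℝ) ^ (β + 3 / 4)) := by
              gcongr
          _ = (j : ℝ) ^ ((3 : ℝ) / 4) * D := by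
              rw [mul_left_comm, ← rpow_add (by positivity), neg_add_cancel_left, mul_comm]

/-- For `p₀ ℓ ∝ ℓ^{−1−β}` on `[d]`, `C = 2(1−2^{−β})^{−1/(β+3/4)}`,
and `1 ≤ nα² ≤ (d/C)^{2β+3/2}`, setting `j = ⌈C (nα²)^{1/(2β+3/2)}⌉`, the tail mass
satisfies `∑_{ℓ=j+1}^d p₀ ℓ ≤ j^{3/4}/(nα²)^{1/2}`. -/
theorem stmt16 (β : ℝ) (hβ : 0 < β) (d n : ℕ) (hd : 1 ≤ d) (α : ℝ) (hα : 0 < α)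
    (C : ℝ) (hC : C = 2 * (1 - 2 ^ (-β)) ^ (-(1 / (β + 3 / 4))))
    (h1 : 1 ≤ (n : ℝ) * α ^ 2)
    (h2 : (n : ℝ) * α ^ 2 ≤ ((d : ℝ) / C) ^ (2 * β + 3 / 2))
    (j : ℕ) (hj : j = ⌈C * ((n : ℝ) * α ^ 2) ^ (1 / (2 * β + 3 / 2))⌉₊) :
    ∑ ℓ ∈ Finset.Icc (j + 1) d,
        ((ℓ : ℝ) ^ (-(1 + β)) / ∑ ℓ' ∈ Finset.Icc 1 d, (ℓ' : ℝ) ^ (-(1 + β)))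
      ≤ (j : ℝ) ^ ((3 : ℝ) / 4) / ((n : ℝ) * α ^ 2) ^ ((1 : ℝ) / 2) :=
  stmt16_general β hβ d n α C hC h1 j hj
end
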